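/- Let 𝐕 = (V_1, V_2, …) ∈ 𝒟𝒫(H) be a doubly commuting sequence of pure isometries on a complex Hilbert space H. Then for every ε > 0 and every x ∈ H there exists a sequence (k_1, k_2, …) of positive integers such that ‖D_{𝐖*} x‖ ≥ (1 − ε)‖x‖, where 𝐖 = (V_1^{k_1}, V_2^{k_2}, …). -/

import Mathlib

/- Common definitions for formalizing "Dilation theory and analytic model theory for
doubly commuting sequences of C_{·0}-contractions" by H. Dan and K. Guo. -/

open Filter Topology ContinuousLinearMap

noncomputable section

universe u v

namespace DCPaper

variable {H : Type u} [NormedAddCommGroup H] [InnerProductSpace ℂ H] [CompleteSpace H]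
variable {K : Type v} [NormedAddCommGroup K] [InnerProductSpace ℂ K] [CompleteSpace K]

/-- `T` is a contraction of class `C_{·0}`: `‖T‖ ≤ 1` and `T^{*k} → 0` in the strong
operator topology. -/
def IsCzeroContraction (T : H →L[ℂ] H) : Prop :=
  ‖T‖ ≤ 1 ∧ ∀ x : H, Tendsto (fun k : ℕ => (adjoint T ^ k) x) atTop (𝓝 0)

/-- `S` and `T` doubly commute: `ST = TS` and `ST* = T*S`. -/
def DoublyCommute (S T : H →L[ℂ] H) : Prop :=
  S * T = T * S ∧ S * adjoint T = adjoint T * S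

/-- `𝐓 ∈ 𝒟𝒞(H)`: a doubly commuting sequence of `C_{·0}`-contractions. -/
def IsDCSeq (T : ℕ → H →L[ℂ] H) : Prop :=
  (∀ n, IsCzeroContraction (T n)) ∧ ∀ m n : ℕ, m ≠ n → DoublyCommute (T m) (T n)

/-- A pure isometry: an isometry of class `C_{·0}`. -/
def IsPureIsometry (V : H →L[ℂ] H) : Prop :=
  (∀ x : H, ‖V x‖ = ‖x‖) ∧
    ∀ x : H, Tendsto (fun k : ℕ => (adjoint V ^ k) x) atTop (𝓝 0)

/-- `𝐕 ∈ 𝒟𝒫(H)`: a doubly commuting sequence of pure isometries. -/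
def IsDPSeq (V : ℕ → H →L[ℂ] H) : Prop :=
  (∀ n, IsPureIsometry (V n)) ∧ ∀ m n : ℕ, m ≠ n → DoublyCommute (V m) (V n)

/-- The defect operator `D_T = (I - T*T)^{1/2}` of a contraction `T`. -/
def defectOp (T : H →L[ℂ] H) : H →L[ℂ] H :=
  CFC.sqrt (1 - adjoint T * T)

/-- The finite product `D_{T_0} ⋯ D_{T_{N-1}}` of defect operators. -/
def partialDefect (T : ℕ → H →L[ℂ] H) (N : ℕ) : H →L[ℂ] H :=
  ((List.range N).map fun n => defectOp (T n)).prod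

/-- `D` is the defect operator `D_𝐓` of the sequence `𝐓`, i.e. the strong operator
topology limit of the partial products `D_{T_1} ⋯ D_{T_n}`. -/
def IsSeqDefect (T : ℕ → H →L[ℂ] H) (D : H →L[ℂ] H) : Prop :=
  ∀ x : H, Tendsto (fun N : ℕ => partialDefect T N x) atTop (𝓝 (D x))

/-- `φ_a(T) = (aI - T)(I - āT)⁻¹` (Möbius transform of an operator). -/
def mobius (a : ℂ) (T : H →L[ℂ] H) : H →L[ℂ] H :=
  (a • (1 : H →L[ℂ] H) - T) * Ring.inverse (1 - (starRingEnd ℂ a) • T)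

/-- Membership in `𝔻^∞`, the countable product of copies of the open unit disk. -/
def InPolydisc (l : ℕ → ℂ) : Prop := ∀ n, ‖l n‖ < 1

/-- Membership in the Hilbert multidisc `𝔻_2^∞ = {ζ ∈ ℓ² : |ζ_n| < 1 for all n}`. -/
def InHilbertMultidisc (l : ℕ → ℂ) : Prop :=
  (∀ n, ‖l n‖ < 1) ∧ Summable fun n => ‖l n‖ ^ 2

/-- The sequence `Φ_λ(𝐓)* = (φ_{λ_1}(T_1)*, φ_{λ_2}(T_2)*, …)`. -/
def mobiusStarSeq (l : ℕ → ℂ) (T : ℕ → H →L[ℂ] H) : ℕ → H →L[ℂ] H :=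
  fun n => adjoint (mobius (l n) (T n))

/-- `𝐓^α = T_1^{α_1} ⋯ T_n^{α_n}` for a finitely supported multi-index `α`. -/
def opPow (T : ℕ → H →L[ℂ] H) (α : ℕ →₀ ℕ) : H →L[ℂ] H :=
  ((List.range (α.support.sup id + 1)).map fun n => T n ^ α n).prod

/-- Restriction of a continuous linear map to an invariant submodule. -/
def clmRestrict (f : H →L[ℂ] H) {M : Submodule ℂ H}
    (hf : ∀ x ∈ M, f x ∈ M) : M →L[ℂ] M :=
  { toLinearMap := (f : H →ₗ[ℂ] H).restrict hf
    cont := (f.continuous.comp continuous_subtype_val).subtype_mk _ }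

/-- Compression `P_M A|_M` of an operator `A` to a closed subspace `M`. -/
def compress {M : Submodule ℂ H} (hM : IsClosed (M : Set H))
    (A : H →L[ℂ] H) : M →L[ℂ] M :=
  haveI : CompleteSpace M := hM.completeSpace_coe
  (M.orthogonalProjectionOnto).comp (A.comp M.subtypeL)

/-- `𝐕` is a regular isometric dilation of `𝐓`, where `J : H →L[ℂ] K` is the isometric
inclusion of `H` into the dilation space `K`:  each `V n` is an isometry,
`𝐓^α = P_H 𝐕^α |_H` for every multi-index `α`, and
`𝐓^{*α} 𝐓^β = P_H 𝐕^{*α} 𝐕^β |_H` whenever `min (α n) (β n) = 0` for all `n`. -/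
def IsRegularIsometricDilation (T : ℕ → H →L[ℂ] H) (J : H →L[ℂ] K)
    (V : ℕ → K →L[ℂ] K) : Prop :=
  (∀ x : H, ‖J x‖ = ‖x‖) ∧ (∀ n, ∀ y : K, ‖V n y‖ = ‖y‖) ∧
  (∀ (α : ℕ →₀ ℕ) (x : H), opPow T α x = adjoint J (opPow V α (J x))) ∧
  ∀ α β : ℕ →₀ ℕ, (∀ n, min (α n) (β n) = 0) → ∀ x : H,
    adjoint (opPow T α) (opPow T β x) =
      adjoint J (adjoint (opPow V α) (opPow V β (J x)))

/-- Minimality of a dilation: the smallest closed subspace of `K` containing `J(H)` and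
invariant under every `V n` is `K` itself. -/
def IsMinimalFor (J : H →L[ℂ] K) (V : ℕ → K →L[ℂ] K) : Prop :=
  ∀ M : Submodule ℂ K, IsClosed (M : Set K) → (∀ x : H, J x ∈ M) →
    (∀ n, ∀ y ∈ M, V n y ∈ M) → M = ⊤

/-- A sequence of isometries is of Beurling type: the smallest closed subspace containing
the defect space `𝔇_{𝐕*}` (the closed range of the defect operator `D_{𝐕*}`) and
invariant under every `V n` is the whole space. -/
def IsBeurlingSeq (V : ℕ → K →L[ℂ] K) : Prop :=
  ∃ D : K →L[ℂ] K, IsSeqDefect (fun n => adjoint (V n)) D ∧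
    ∀ M : Submodule ℂ K, IsClosed (M : Set K) → (∀ y : K, D y ∈ M) →
      (∀ n, ∀ y ∈ M, V n y ∈ M) → M = ⊤

/-- A sequence of isometries is of quasi-Beurling type: `Φ_λ(𝐕)` is of Beurling type for
some `λ ∈ 𝔻^∞`. -/
def IsQuasiBeurlingSeq (V : ℕ → K →L[ℂ] K) : Prop :=
  ∃ l : ℕ → ℂ, InPolydisc l ∧ IsBeurlingSeq fun n => mobius (l n) (V n)

/-- `𝐓 ∈ 𝒟𝒞` is of Beurling type: its minimal regular isometric dilation is of
Beurling type. -/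
def IsBeurlingDC (T : ℕ → H →L[ℂ] H) : Prop :=
  ∃ (K' : Type u) (_ : NormedAddCommGroup K') (_ : InnerProductSpace ℂ K')
    (_ : CompleteSpace K') (J : H →L[ℂ] K') (V : ℕ → K' →L[ℂ] K'),
    IsRegularIsometricDilation T J V ∧ IsMinimalFor J V ∧ IsBeurlingSeq V

/-- `𝐓 ∈ 𝒟𝒞` is of quasi-Beurling type: its minimal regular isometric dilation is of
quasi-Beurling type. -/
def IsQuasiBeurlingDC (T : ℕ → H →L[ℂ] H) : Prop :=
  ∃ (K' : Type u) (_ : NormedAddCommGroup K') (_ : InnerProductSpace ℂ K')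
    (_ : CompleteSpace K') (J : H →L[ℂ] K') (V : ℕ → K' →L[ℂ] K'),
    IsRegularIsometricDilation T J V ∧ IsMinimalFor J V ∧ IsQuasiBeurlingSeq V

/-- The family `Mz` of operators on the `E`-valued Hardy space
`H²_E(𝔻_2^∞) = lp (fun _ : (ℕ →₀ ℕ) => E) 2` is the tuple of coordinate multiplication
operators `𝐌_ζ`, characterized on the canonical orthonormal system. -/
def IsCoordMult {E : Type*} [NormedAddCommGroup E] [InnerProductSpace ℂ E]
    [CompleteSpace E]
    (Mz : ℕ → lp (fun _ : (ℕ →₀ ℕ) => E) 2 →L[ℂ] lp (fun _ : (ℕ →₀ ℕ) => E) 2) : Prop :=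
  ∀ (n : ℕ) (α : ℕ →₀ ℕ) (x : E),
    Mz n (lp.single 2 α x) = lp.single 2 (α + Finsupp.single n 1) x

/-- The one-variable shift `M_z` on the `E`-valued Hardy space of the disk
`H²_E(𝔻) = lp (fun _ : ℕ => E) 2`, characterized on the canonical orthonormal system. -/
def IsOneShift {E : Type*} [NormedAddCommGroup E] [InnerProductSpace ℂ E]
    [CompleteSpace E]
    (S : lp (fun _ : ℕ => E) 2 →L[ℂ] lp (fun _ : ℕ => E) 2) : Prop :=
  ∀ (k : ℕ) (x : E), S (lp.single 2 k x) = lp.single 2 (k + 1) x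

/-- The monomial `ζ^α`. -/
def monomial (ζ : ℕ → ℂ) (α : ℕ →₀ ℕ) : ℂ := α.prod fun n k => ζ n ^ k

/-- Evaluation of an element of the vector-valued Hardy space `H²_E(𝔻_2^∞)` at a point
`ζ` of the Hilbert multidisc: `F(ζ) = Σ_α ζ^α • F_α`. -/
def hardyEval {E : Type*} [NormedAddCommGroup E] [InnerProductSpace ℂ E]
    (F : lp (fun _ : (ℕ →₀ ℕ) => E) 2) (ζ : ℕ → ℂ) : E :=
  ∑' α : ℕ →₀ ℕ, monomial ζ α • F α

/-- Evaluation of an element of the vector-valued Hardy space `H²_E(𝔻)` of the disk at a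
point `z ∈ 𝔻`: `g(z) = Σ_k z^k • g_k`. -/
def diskEval {E : Type*} [NormedAddCommGroup E] [InnerProductSpace ℂ E]
    (g : lp (fun _ : ℕ => E) 2) (z : ℂ) : E :=
  ∑' k : ℕ, z ^ k • g k

/-- The Hilbert multidisc `𝔻_2^∞` as a subset of `ℓ²`. -/
def hilbertMultidisc : Set (lp (fun _ : ℕ => ℂ) 2) := {ζ | ∀ n, ‖ζ n‖ < 1}



section Lemma210Aux

open scoped InnerProductSpace

/-- The projection `1 - W W*` associated to an isometry `W`. -/
private def projOf (W : H →L[ℂ] H) : H →L[ℂ] H := 1 - W * adjoint W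

private lemma projOf_sa (W : H →L[ℂ] H) : IsSelfAdjoint (projOf W) := by
  show star _ = _
  simp [projOf, star_sub, star_mul, star_eq_adjoint, adjoint_adjoint]

private lemma projOf_idem (W : H →L[ℂ] H) (h : adjoint W * W = 1) :
    projOf W * projOf W = projOf W := by
  have hp : (W * adjoint W) * (W * adjoint W) = W * adjoint W := by
    rw [mul_assoc, ← mul_assoc (adjoint W), h, one_mul]
  simp only [projOf, sub_mul, mul_sub, one_mul, mul_one, hp]
  abel

private lemma projOf_nonneg (W : H →L[ℂ] H) (h : adjoint W * W = 1) :
    0 ≤ projOf W := by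
  have h2 := star_mul_self_nonneg (projOf W)
  rwa [(projOf_sa W).star_eq, projOf_idem W h] at h2

set_option synthInstance.maxHeartbeats 1000000 in
private lemma defectOp_adjoint (W : H →L[ℂ] H) (h : adjoint W * W = 1) :
    defectOp (adjoint W) = projOf W := by
  have : defectOp (adjoint W) = CFC.sqrt ((projOf W) ^ 2) := by
    rw [defectOp, adjoint_adjoint, sq, projOf_idem W h]; rfl
  rw [this, CFC.sqrt_sq _ (projOf_nonneg W h)]

private lemma norm_apply_le_of_proj (A : H →L[ℂ] H) (hsa : IsSelfAdjoint A)
    (hid : A * A = A) (y : H) : ‖A y‖ ≤ ‖y‖ := by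
  have hadj : adjoint A = A := by rw [← star_eq_adjoint, hsa.star_eq]
  have e1 : ⟪A y, A y⟫_ℂ = ⟪A y, y⟫_ℂ := by
    calc ⟪A y, A y⟫_ℂ = ⟪adjoint A (A y), y⟫_ℂ := (adjoint_inner_left A y (A y)).symm
      _ = ⟪(A * A) y, y⟫_ℂ := by rw [hadj]; rfl
      _ = ⟪A y, y⟫_ℂ := by rw [hid]
  have h2 : ‖A y‖ ^ 2 = RCLike.re ⟪A y, y⟫_ℂ := by
    rw [← e1, inner_self_eq_norm_sq]
  have h3 : RCLike.re ⟪A y, y⟫_ℂ ≤ ‖A y‖ * ‖y‖ :=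
    (RCLike.re_le_norm _).trans (norm_inner_le_norm _ _)
  nlinarith [norm_nonneg (A y), norm_nonneg y]

private lemma pow_isometry (A : H →L[ℂ] H) (h : ∀ y, ‖A y‖ = ‖y‖) (m : ℕ) (y : H) :
    ‖(A ^ m) y‖ = ‖y‖ := by
  induction m generalizing y with
  | zero => simp
  | succ m ih => rw [pow_succ, ContinuousLinearMap.mul_apply, ih, h]

private lemma exists_seqDefect_of_isometries (W : ℕ → H →L[ℂ] H)
    (hiso : ∀ n y, ‖W n y‖ = ‖y‖)
    (hcomm : ∀ m n, m ≠ n → W m * W n = W n * W m ∧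
      W m * adjoint (W n) = adjoint (W n) * W m) :
    ∃ D : H →L[ℂ] H, IsSeqDefect (fun n => adjoint (W n)) D ∧
      ∀ (x : H) (N : ℕ), ‖x - partialDefect (fun n => adjoint (W n)) N x‖ ≤
        ∑ n ∈ Finset.range N, ‖adjoint (W n) x‖ := by
  have h1 : ∀ n, adjoint (W n) * W n = 1 := fun n =>
    (ContinuousLinearMap.norm_map_iff_adjoint_comp_self (W n)).mp (hiso n)
  set Q : ℕ → H →L[ℂ] H := partialDefect (fun n => adjoint (W n)) with hQ
  have hQzero : Q 0 = 1 := by simp [hQ, partialDefect]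
  have hQsucc : ∀ N, Q (N + 1) = Q N * projOf (W N) := by
    intro N
    rw [hQ]
    simp only [partialDefect, List.range_succ, List.map_append, List.prod_append,
      List.map_cons, List.map_nil, List.prod_cons, List.prod_nil, mul_one]
    rw [defectOp_adjoint _ (h1 N)]
  have hPcomm : ∀ m n, Commute (projOf (W m)) (projOf (W n)) := by
    intro m n
    rcases eq_or_ne m n with rfl | h
    · exact Commute.refl _
    · have c1 : Commute (W m) (W n) := (hcomm m n h).1
      have c2 : Commute (W m) (adjoint (W n)) := (hcomm m n h).2
      have c3 : Commute (adjoint (W m)) (W n) :=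
        (show Commute (W n) (adjoint (W m)) from (hcomm n m h.symm).2).symm
      have c4 : Commute (adjoint (W m)) (adjoint (W n)) := by
        have := c1.star_star
        rwa [star_eq_adjoint, star_eq_adjoint] at this
      have cp : Commute (W m * adjoint (W m)) (W n * adjoint (W n)) :=
        (c1.mul_right c2).mul_left (c3.mul_right c4)
      have h5 : Commute (1 - W m * adjoint (W m)) (W n * adjoint (W n)) :=
        (Commute.one_left _).sub_left cp
      exact (Commute.one_right _).sub_right h5
  have hQP : ∀ N m, Commute (Q N) (projOf (W m)) := by
    intro N
    induction N with
    | zero => intro m; rw [hQzero]; exact Commute.one_left _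
    | succ N ih => intro m; rw [hQsucc]; exact Commute.mul_left (ih m) (hPcomm N m)
  have hQidem : ∀ N, Q N * Q N = Q N := by
    intro N
    induction N with
    | zero => rw [hQzero, one_mul]
    | succ N ih =>
      rw [hQsucc, ((hQP N N).symm).mul_mul_mul_comm (Q N) (projOf (W N)), ih,
        projOf_idem _ (h1 N)]
  have hQsa : ∀ N, IsSelfAdjoint (Q N) := by
    intro N
    induction N with
    | zero => rw [hQzero]; exact IsSelfAdjoint.one _
    | succ N ih =>
      rw [hQsucc]
      show star _ = _
      rw [star_mul, ih.star_eq, (projOf_sa (W N)).star_eq]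
      exact ((hQP N N).eq).symm
  have hQcontr : ∀ N y, ‖Q N y‖ ≤ ‖y‖ := fun N y =>
    norm_apply_le_of_proj _ (hQsa N) (hQidem N) y
  have hmono : ∀ N y, ‖Q (N + 1) y‖ ≤ ‖Q N y‖ := by
    intro N y
    rw [hQsucc N, (hQP N N).eq, ContinuousLinearMap.mul_apply]
    exact norm_apply_le_of_proj _ (projOf_sa _) (projOf_idem _ (h1 N)) _
  have hkey : ∀ M N, M ≤ N → Q M * Q N = Q N := by
    intro M N hMN
    induction N, hMN using Nat.le_induction with
    | base => exact hQidem M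
    | succ N hMN ih => rw [hQsucc, ← mul_assoc, ih]
  have key2 : ∀ M N (x : H), M ≤ N → ⟪Q M x, Q N x⟫_ℂ = ⟪x, Q N x⟫_ℂ := by
    intro M N x h
    have hadjQ : adjoint (Q M) = Q M := by rw [← star_eq_adjoint, (hQsa M).star_eq]
    calc ⟪Q M x, Q N x⟫_ℂ = ⟪adjoint (Q M) x, Q N x⟫_ℂ := by rw [hadjQ]
      _ = ⟪x, Q M (Q N x)⟫_ℂ := adjoint_inner_left _ _ _
      _ = ⟪x, (Q M * Q N) x⟫_ℂ := rfl
      _ = ⟪x, Q N x⟫_ℂ := by rw [hkey M N h]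
  have hnormsq : ∀ N (x : H), ‖Q N x‖ ^ 2 = RCLike.re ⟪x, Q N x⟫_ℂ := by
    intro N x
    rw [← key2 N N x le_rfl, inner_self_eq_norm_sq]
  have hdist : ∀ M N (x : H), M ≤ N →
      ‖Q M x - Q N x‖ ^ 2 = ‖Q M x‖ ^ 2 - ‖Q N x‖ ^ 2 := by
    intro M N x h
    have e1 : RCLike.re ⟪Q M x, Q N x⟫_ℂ = ‖Q N x‖ ^ 2 := by
      rw [key2 M N x h, ← hnormsq N x]
    rw [@norm_sub_sq ℂ, e1]
    ring
  have hcauchy : ∀ x : H, CauchySeq (fun N => Q N x) := by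
    intro x
    have hanti : Antitone (fun N => ‖Q N x‖ ^ 2) := by
      apply antitone_nat_of_succ_le
      intro N
      have := hmono N x
      nlinarith [norm_nonneg (Q (N + 1) x), norm_nonneg (Q N x)]
    have hbdd : BddBelow (Set.range fun N => ‖Q N x‖ ^ 2) := by
      refine ⟨0, ?_⟩
      rintro y ⟨N, rfl⟩
      positivity
    have hca : CauchySeq (fun N => ‖Q N x‖ ^ 2) :=
      (tendsto_atTop_ciInf hanti hbdd).cauchySeq
    rw [Metric.cauchySeq_iff']
    intro ε hε
    obtain ⟨N, hN⟩ := Metric.cauchySeq_iff'.mp hca (ε ^ 2) (pow_pos hε 2)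
    refine ⟨N, fun n hn => ?_⟩
    have h1' := hN n hn
    rw [Real.dist_eq] at h1'
    have h2' := hdist N n x hn
    have hsq : dist (Q n x) (Q N x) ^ 2 < ε ^ 2 := by
      rw [dist_eq_norm, norm_sub_rev, h2']
      calc ‖Q N x‖ ^ 2 - ‖Q n x‖ ^ 2 ≤ |‖Q n x‖ ^ 2 - ‖Q N x‖ ^ 2| := by
            rw [abs_sub_comm]; exact le_abs_self _
        _ < ε ^ 2 := h1'
    nlinarith [dist_nonneg (x := Q n x) (y := Q N x)]
  have hconv : ∀ x : H, ∃ y, Tendsto (fun N => Q N x) atTop (𝓝 y) := fun x =>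
    cauchySeq_tendsto_of_complete (hcauchy x)
  choose f hf using hconv
  have hadd : ∀ x y : H, f (x + y) = f x + f y := by
    intro x y
    refine tendsto_nhds_unique (hf (x + y)) ?_
    have : Tendsto (fun N => Q N x + Q N y) atTop (𝓝 (f x + f y)) := (hf x).add (hf y)
    simpa [map_add] using this
  have hsmul : ∀ (c : ℂ) (x : H), f (c • x) = c • f x := by
    intro c x
    refine tendsto_nhds_unique (hf (c • x)) ?_
    have : Tendsto (fun N => c • Q N x) atTop (𝓝 (c • f x)) := (hf x).const_smul c
    simpa [map_smul] using this
  have hbound : ∀ x : H, ‖f x‖ ≤ 1 * ‖x‖ := by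
    intro x
    rw [one_mul]
    exact le_of_tendsto (hf x).norm (Filter.Eventually.of_forall fun N => hQcontr N x)
  refine ⟨LinearMap.mkContinuous
    { toFun := f
      map_add' := hadd
      map_smul' := hsmul } 1 hbound, fun x => hf x, ?_⟩
  intro x N
  induction N with
  | zero => simp [hQzero]
  | succ N ih =>
    have step : ‖Q N x - Q (N + 1) x‖ ≤ ‖adjoint (W N) x‖ := by
      have e : Q N x - Q (N + 1) x = Q N (W N (adjoint (W N) x)) := by
        rw [hQsucc N]
        show Q N x - Q N (projOf (W N) x) = _
        rw [← map_sub]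
        congr 1
        simp [projOf, ContinuousLinearMap.sub_apply, ContinuousLinearMap.mul_apply,
          ContinuousLinearMap.one_apply]
      rw [e]
      calc ‖Q N (W N (adjoint (W N) x))‖ ≤ ‖W N (adjoint (W N) x)‖ := hQcontr N _
        _ = ‖adjoint (W N) x‖ := hiso N _
    calc ‖x - Q (N + 1) x‖ ≤ ‖x - Q N x‖ + ‖Q N x - Q (N + 1) x‖ := by
          simpa using norm_add_le (x - Q N x) (Q N x - Q (N + 1) x)
      _ ≤ (∑ n ∈ Finset.range N, ‖adjoint (W n) x‖) + ‖adjoint (W N) x‖ :=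
          add_le_add ih step
      _ = ∑ n ∈ Finset.range (N + 1), ‖adjoint (W n) x‖ :=
          (Finset.sum_range_succ _ N).symm

end Lemma210Aux

/-- **Lemma 2.10.** If `𝐕 ∈ 𝒟𝒫(H)` is a doubly commuting sequence of pure isometries,
then for every `ε > 0` and every `x ∈ H` there is a sequence `(k_1, k_2, …)` of positive
integers such that `‖D_{𝐖*} x‖ ≥ (1 - ε)‖x‖`, where `𝐖 = (V_1^{k_1}, V_2^{k_2}, …)`. -/
theorem exists_powers_defect_norm_ge
    (V : ℕ → H →L[ℂ] H) (hV : IsDPSeq V) :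
    ∀ ε : ℝ, 0 < ε → ∀ x : H, ∃ k : ℕ → ℕ, (∀ n, 0 < k n) ∧
      ∃ D : H →L[ℂ] H,
        IsSeqDefect (fun n => adjoint (V n ^ k n)) D ∧ (1 - ε) * ‖x‖ ≤ ‖D x‖ := by
  intro ε hε x
  have hchoice : ∀ n : ℕ, ∃ m : ℕ, 0 < m ∧
      ‖(adjoint (V n) ^ m) x‖ ≤ ε * ‖x‖ / 2 ^ (n + 1) := by
    intro n
    rcases eq_or_ne x 0 with rfl | hx
    · exact ⟨1, one_pos, by simp⟩
    · have hpos : 0 < ε * ‖x‖ / 2 ^ (n + 1) :=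
        div_pos (mul_pos hε (norm_pos_iff.mpr hx)) (by positivity)
      have ht := (hV.1 n).2 x
      have hev : ∀ᶠ m in atTop, ‖(adjoint (V n) ^ m) x‖ < ε * ‖x‖ / 2 ^ (n + 1) :=
        (NormedAddCommGroup.tendsto_nhds_zero.mp ht) _ hpos
      obtain ⟨m, hm1, hm2⟩ := ((Filter.eventually_ge_atTop 1).and hev).exists
      exact ⟨m, hm1, hm2.le⟩
  choose k hk1 hk2 using hchoice
  set W : ℕ → H →L[ℂ] H := fun n => V n ^ k n with hW
  have hadj : ∀ n, adjoint (W n) = adjoint (V n) ^ k n := by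
    intro n
    rw [hW]
    simp only [← ContinuousLinearMap.star_eq_adjoint, star_pow]
  have hiso : ∀ n y, ‖W n y‖ = ‖y‖ := fun n y =>
    pow_isometry (V n) ((hV.1 n).1) (k n) y
  have hcomm : ∀ m n, m ≠ n → W m * W n = W n * W m ∧
      W m * adjoint (W n) = adjoint (W n) * W m := by
    intro m n h
    have c1 : Commute (V m) (V n) := (hV.2 m n h).1
    have c2 : Commute (V m) (adjoint (V n)) := (hV.2 m n h).2
    constructor
    · exact (c1.pow_pow (k m) (k n)).eq
    · rw [hadj n]
      exact (c2.pow_pow (k m) (k n)).eq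
  obtain ⟨D, hD, hest⟩ := exists_seqDefect_of_isometries W hiso hcomm
  refine ⟨k, hk1, D, hD, ?_⟩
  have hbnd : ∀ N : ℕ,
      ‖x - partialDefect (fun n => adjoint (W n)) N x‖ ≤ ε * ‖x‖ := by
    intro N
    refine (hest x N).trans ?_
    have hterm : ∀ n ∈ Finset.range N,
        ‖adjoint (W n) x‖ ≤ ε * ‖x‖ * (1 / 2) ^ (n + 1) := by
      intro n _
      have := hk2 n
      rw [hadj n]
      calc ‖(adjoint (V n) ^ k n) x‖ ≤ ε * ‖x‖ / 2 ^ (n + 1) := this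
        _ = ε * ‖x‖ * (1 / 2) ^ (n + 1) := by
            rw [div_pow, one_pow]; ring
    calc (∑ n ∈ Finset.range N, ‖adjoint (W n) x‖)
        ≤ ∑ n ∈ Finset.range N, ε * ‖x‖ * (1 / 2) ^ (n + 1) :=
          Finset.sum_le_sum hterm
      _ = ε * ‖x‖ * ((1 / 2) * ∑ n ∈ Finset.range N, (1 / (2 : ℝ)) ^ n) := by
          rw [Finset.mul_sum, Finset.mul_sum]
          congr 1
          funext n
          ring
      _ ≤ ε * ‖x‖ * ((1 / 2) * 2) := by
          have h2 := sum_geometric_two_le N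
          have hεx : (0 : ℝ) ≤ ε * ‖x‖ := mul_nonneg hε.le (norm_nonneg x)
          nlinarith
      _ = ε * ‖x‖ := by ring
  have hlim : Tendsto (fun N => ‖x - partialDefect (fun n => adjoint (W n)) N x‖)
      atTop (𝓝 ‖x - D x‖) := (tendsto_const_nhds.sub (hD x)).norm
  have hDx : ‖x - D x‖ ≤ ε * ‖x‖ :=
    le_of_tendsto hlim (Filter.Eventually.of_forall hbnd)
  have htri : ‖x‖ - ‖D x‖ ≤ ‖x - D x‖ := norm_sub_norm_le x (D x)
  have : (1 - ε) * ‖x‖ = ‖x‖ - ε * ‖x‖ := by ring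
  linarith


end DCPaper

end
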